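/- (Recovery of the derivative of the left factor in the non-square case.) Let n ≥ m ≥ 1 and let A : ℝ → ℂ^{n×m}, U : ℝ → ℂ^{n×m}, S : ℝ → ℂ^{m×m}, V : ℝ → ℂ^{m×m} be differentiable at t₀ with A(t) = U(t) S(t) V(t)* for all t in a neighborhood of t₀, where U(t)* U(t) = 𝟙_m, V(t) is unitary, and S(t) is diagonal with real entries, invertible at t₀. Then U'(t₀) = U(t₀)·(U(t₀)* U'(t₀)) + (𝟙_n − U(t₀) U(t₀)*) · A'(t₀) · V(t₀) · S(t₀)^{−1}. -/

import Mathlib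

/-!
Differentiating `A = U S Vᴴ` at `t₀` gives `A' = (U' S + U S') Vᴴ + U S V'ᴴ`. The projector
`1 - U Uᴴ` annihilates `U`, so it kills the last two terms, and `Vᴴ V = 1`, `S S⁻¹ = 1` then give
`(1 - U Uᴴ) A' V S⁻¹ = (1 - U Uᴴ) U'`. Adding the component `U (Uᴴ U')` of `U'` along `U`
recovers `U'`.
-/

open Matrix Topology

def HasEntrywiseDerivAt {m n E : Type*} [NormedAddCommGroup E] [NormedSpace ℝ E]
    (F : ℝ → Matrix m n E) (F' : Matrix m n E) (t : ℝ) : Prop :=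
  ∀ i j, HasDerivAt (fun t => F t i j) (F' i j) t

namespace HasEntrywiseDerivAt

section NormedSpace

variable {m n E : Type*} [NormedAddCommGroup E] [NormedSpace ℝ E]
  {F G : ℝ → Matrix m n E} {F' F₁ F₂ : Matrix m n E} {t : ℝ}

theorem unique (h₁ : HasEntrywiseDerivAt F F₁ t) (h₂ : HasEntrywiseDerivAt F F₂ t) :
    F₁ = F₂ :=
  Matrix.ext fun i j => (h₁ i j).unique (h₂ i j)

theorem congr_of_eventuallyEq (h : HasEntrywiseDerivAt F F' t) (hGF : G =ᶠ[𝓝 t] F) :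
    HasEntrywiseDerivAt G F' t := fun i j =>
  (h i j).congr_of_eventuallyEq (hGF.mono fun _ hs => congrArg (· i j) hs)

theorem conjTranspose [StarAddMonoid E] [StarModule ℝ E] [ContinuousStar E]
    (h : HasEntrywiseDerivAt F F' t) : HasEntrywiseDerivAt (fun t => (F t)ᴴ) F'ᴴ t :=
  fun i j => (h j i).star

end NormedSpace

variable {l m n 𝔸 : Type*} [Fintype m] [NormedRing 𝔸] [NormedAlgebra ℝ 𝔸] {t : ℝ}

theorem mul {F : ℝ → Matrix l m 𝔸} {G : ℝ → Matrix m n 𝔸} {F' : Matrix l m 𝔸}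
    {G' : Matrix m n 𝔸} (hF : HasEntrywiseDerivAt F F' t) (hG : HasEntrywiseDerivAt G G' t) :
    HasEntrywiseDerivAt (fun t => F t * G t) (F' * G t + F t * G') t := by
  intro i k
  simp only [Matrix.mul_apply, Matrix.add_apply, ← Finset.sum_add_distrib]
  exact HasDerivAt.fun_sum fun j _ => (hF i j).mul (hG j k)

end HasEntrywiseDerivAt

theorem hasEntrywiseDerivAt_diagonal {m 𝔸 : Type*} [DecidableEq m] [NormedRing 𝔸]
    [NormedAlgebra ℝ 𝔸] {d : m → ℝ → 𝔸} {d' : m → 𝔸} {t : ℝ}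
    (hd : ∀ i, HasDerivAt (d i) (d' i) t) :
    HasEntrywiseDerivAt (fun t => diagonal fun i => d i t) (diagonal d') t := by
  intro i j
  by_cases hij : i = j
  · subst hij
    simpa only [diagonal_apply_eq] using hd i
  · simpa only [diagonal_apply_ne _ hij] using hasDerivAt_const t (0 : 𝔸)

section Projection

variable {m n R : Type*} [Fintype m] [Fintype n] [DecidableEq m] [DecidableEq n] [Ring R]
  [StarRing R] {U : Matrix n m R}

theorem one_sub_mul_conjTranspose_mul_self (hU : Uᴴ * U = 1) : (1 - U * Uᴴ) * U = 0 := by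
  rw [Matrix.sub_mul, Matrix.one_mul, Matrix.mul_assoc, hU, Matrix.mul_one, sub_self]

theorem eq_of_derivative_mul_mul_conjTranspose {U' A' : Matrix n m R}
    {S S' T V V' : Matrix m m R} (hU : Uᴴ * U = 1) (hV : Vᴴ * V = 1) (hST : S * T = 1)
    (hA' : A' = (U' * S + U * S') * Vᴴ + U * S * V'ᴴ) :
    U' = U * (Uᴴ * U') + (1 - U * Uᴴ) * A' * V * T := by
  have hP := one_sub_mul_conjTranspose_mul_self hU
  have hPA' : (1 - U * Uᴴ) * A' = (1 - U * Uᴴ) * U' * S * Vᴴ := by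
    simp only [hA', Matrix.mul_add, Matrix.add_mul, ← Matrix.mul_assoc, hP, Matrix.zero_mul,
      add_zero]
  rw [hPA', Matrix.mul_assoc _ Vᴴ V, hV, Matrix.mul_one, Matrix.mul_assoc _ S T, hST,
    Matrix.mul_one, Matrix.sub_mul, Matrix.one_mul, Matrix.mul_assoc]
  abel

end Projection

theorem deriv_left_factor_nonsquare_general (n m : ℕ)
    (A U : ℝ → Matrix (Fin n) (Fin m) ℂ) (V : ℝ → Matrix (Fin m) (Fin m) ℂ)
    (s : Fin m → ℝ → ℝ) (t₀ : ℝ)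
    (A' U' : Matrix (Fin n) (Fin m) ℂ) (V' : Matrix (Fin m) (Fin m) ℂ) (s' : Fin m → ℝ)
    (hA' : ∀ i j, HasDerivAt (fun t => A t i j) (A' i j) t₀)
    (hU' : ∀ i j, HasDerivAt (fun t => U t i j) (U' i j) t₀)
    (hV' : ∀ i j, HasDerivAt (fun t => V t i j) (V' i j) t₀)
    (hs' : ∀ i, HasDerivAt (s i) (s' i) t₀)
    (hU : ∀ᶠ t in nhds t₀, (U t)ᴴ * U t = 1)
    (hV : ∀ᶠ t in nhds t₀, V t ∈ Matrix.unitaryGroup (Fin m) ℂ)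
    (hSVD : ∀ᶠ t in nhds t₀,
      A t = U t * Matrix.diagonal (fun i => ((s i t : ℝ) : ℂ)) * (V t)ᴴ)
    (hinv : ∀ i, s i t₀ ≠ 0) :
    U' = U t₀ * ((U t₀)ᴴ * U')
      + (1 - U t₀ * (U t₀)ᴴ) * A' * V t₀
          * (Matrix.diagonal (fun i => ((s i t₀ : ℝ) : ℂ)))⁻¹ := by
  have hS : HasEntrywiseDerivAt (fun t => diagonal fun i => ((s i t : ℝ) : ℂ))
      (diagonal fun i => ((s' i : ℝ) : ℂ)) t₀ :=
    hasEntrywiseDerivAt_diagonal fun i => (hs' i).ofReal_comp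
  have hA'_product := ((HasEntrywiseDerivAt.mul hU' hS).mul
    (HasEntrywiseDerivAt.conjTranspose hV')).congr_of_eventuallyEq hSVD
  have hS_unit : IsUnit (diagonal fun i => ((s i t₀ : ℝ) : ℂ)).det :=
    (isUnit_iff_isUnit_det _).mp <| isUnit_diagonal.mpr <|
      Pi.isUnit_iff.mpr fun i => (Complex.ofReal_ne_zero.mpr (hinv i)).isUnit
  exact eq_of_derivative_mul_mul_conjTranspose hU.self_of_nhds
    (mem_unitaryGroup_iff'.mp hV.self_of_nhds) (mul_nonsing_inv _ hS_unit)
    (HasEntrywiseDerivAt.unique hA' hA'_product)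

/-- **Recovery of the derivative of the left factor in the non-square case.** For a
differentiable SVD path `A(t) = U(t) S(t) V(t)ᴴ` with `A, U : ℝ → ℂ^{n×m}` (`n ≥ m`),
`U(t)ᴴ U(t) = 𝟙ₘ`, `V(t)` unitary, `S(t)` real diagonal and invertible at `t₀`:
`U'(t₀) = U(t₀) (U(t₀)ᴴ U'(t₀)) + (𝟙ₙ − U(t₀) U(t₀)ᴴ) A'(t₀) V(t₀) S(t₀)⁻¹`. -/
theorem deriv_left_factor_nonsquare (n m : ℕ) (hm : 1 ≤ m) (hnm : m ≤ n)
    (A U : ℝ → Matrix (Fin n) (Fin m) ℂ) (V : ℝ → Matrix (Fin m) (Fin m) ℂ)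
    (s : Fin m → ℝ → ℝ) (t₀ : ℝ)
    (A' U' : Matrix (Fin n) (Fin m) ℂ) (V' : Matrix (Fin m) (Fin m) ℂ) (s' : Fin m → ℝ)
    (hA' : ∀ i j, HasDerivAt (fun t => A t i j) (A' i j) t₀)
    (hU' : ∀ i j, HasDerivAt (fun t => U t i j) (U' i j) t₀)
    (hV' : ∀ i j, HasDerivAt (fun t => V t i j) (V' i j) t₀)
    (hs' : ∀ i, HasDerivAt (s i) (s' i) t₀)
    (hU : ∀ᶠ t in nhds t₀, (U t)ᴴ * U t = 1)
    (hV : ∀ᶠ t in nhds t₀, V t ∈ Matrix.unitaryGroup (Fin m) ℂ)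
    (hSVD : ∀ᶠ t in nhds t₀,
      A t = U t * Matrix.diagonal (fun i => ((s i t : ℝ) : ℂ)) * (V t)ᴴ)
    (hinv : ∀ i, s i t₀ ≠ 0) :
    U' = U t₀ * ((U t₀)ᴴ * U')
      + (1 - U t₀ * (U t₀)ᴴ) * A' * V t₀
          * (Matrix.diagonal (fun i => ((s i t₀ : ℝ) : ℂ)))⁻¹ :=
  deriv_left_factor_nonsquare_general n m A U V s t₀ A' U' V' s' hA' hU' hV' hs' hU hV hSVD hinv
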